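/- arXiv:2409.14685 — 2 statements merged into one kernel-verified Lean document; each statement's English description precedes it below -/
import Mathlib

section
/- Let C ≥ 2 be an integer and Q : ℝ → ℂ the 2π-periodic step function with Q(φ) = exp(i(2ℓ+1)π/C) for 2ℓπ/C ≤ φ < 2(ℓ+1)π/C, ℓ = 0,…,C−1. For every nonzero integer k that is NOT of the form 1 − pC with p ∈ ℤ, the Fourier coefficient a_k = (1/2π)∫₀^{2π} Q(φ)e^{-ikφ} dφ equals 0. -/
/-!
On the `ℓ`-th of the `C` arcs of length `h = 2π/C`, `Q` is the constant `e^{iπ/C} ω^ℓ` with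
`ω = e^{2πi/C}`, while translating the arc to `[0, h]` multiplies `∫ e^{-ikφ}` by `ω^{-kℓ}`.
Hence `2π a_k = e^{iπ/C} (∫₀^h e^{-ikφ} dφ) ∑_{ℓ<C} (ω^{1-k})^ℓ`, and the geometric sum vanishes
because `ω^{1-k}` is a `C`-th root of unity different from `1` exactly when `C ∤ 1 - k`.
-/

open Real Set MeasureTheory Finset
open scoped Interval

theorem IsPrimitiveRoot.geom_sum_zpow_eq_zero {K : Type*} [Field K] {ω : K} {n : ℕ}
    (hω : IsPrimitiveRoot ω n) {m : ℤ} (hm : ¬ (n : ℤ) ∣ m) :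
    ∑ ℓ ∈ range n, (ω ^ m) ^ ℓ = 0 := by
  have hpow : (ω ^ m) ^ n = 1 := by
    rw [← zpow_natCast, ← zpow_mul, mul_comm, zpow_mul, zpow_natCast, hω.pow_eq_one, one_zpow]
  rw [geom_sum_eq (mt (hω.zpow_eq_one_iff_dvd m).mp hm), hpow, sub_self, zero_div]

theorem ae_restrict_uIoc_eq_of_eqOn_Ico {α : Type*} {a b : ℝ} (hab : a ≤ b) {f : ℝ → α} {c : α}
    (hf : ∀ x ∈ Ico a b, f x = c) : ∀ᵐ x ∂volume.restrict (Ι a b), f x = c := by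
  rw [uIoc_of_le hab, ← ae_restrict_congr_set Ico_ae_eq_Ioc]
  exact ae_restrict_of_forall_mem measurableSet_Ico hf

section StepFunction

variable {𝕜 : Type*} [RCLike 𝕜] {Q g : ℝ → 𝕜}

theorem intervalIntegral.integral_mul_eq_const_mul_of_eqOn_Ico {a b : ℝ} (hab : a ≤ b) {c : 𝕜}
    (hQ : ∀ x ∈ Ico a b, Q x = c) : ∫ x in a..b, Q x * g x = c * ∫ x in a..b, g x := by
  rw [← intervalIntegral.integral_const_mul]
  refine intervalIntegral.integral_congr_ae_restrict ?_
  filter_upwards [ae_restrict_uIoc_eq_of_eqOn_Ico hab hQ] with x hx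
  simp only [hx]

theorem intervalIntegrable_mul_of_eqOn_Ico {a b : ℝ} (hab : a ≤ b) {c : 𝕜}
    (hQ : ∀ x ∈ Ico a b, Q x = c) (hg : IntervalIntegrable g volume a b) :
    IntervalIntegrable (fun x => Q x * g x) volume a b := by
  refine (hg.const_mul c).congr_ae ?_
  filter_upwards [ae_restrict_uIoc_eq_of_eqOn_Ico hab hQ] with x hx
  simp only [hx]

theorem intervalIntegral.integral_mul_eq_sum_of_eqOn_Ico {N : ℕ} {h : ℝ} {c : ℕ → 𝕜}
    (hh : 0 ≤ h)
    (hQ : ∀ ℓ < N, ∀ x ∈ Ico (ℓ * h) ((ℓ + 1) * h), Q x = c ℓ) (hg : Continuous g) :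
    ∫ x in 0..N * h, Q x * g x = ∑ ℓ ∈ range N, c ℓ * ∫ x in ℓ * h..(ℓ + 1) * h, g x := by
  have hmono (ℓ : ℕ) : (ℓ : ℝ) * h ≤ (ℓ + 1) * h := by nlinarith
  have hint : ∀ ℓ < N, IntervalIntegrable (fun x => Q x * g x) volume (ℓ * h) ((ℓ + 1 : ℕ) * h) :=
    fun ℓ hℓ => by
      push_cast
      exact intervalIntegrable_mul_of_eqOn_Ico (hmono ℓ) (hQ ℓ hℓ) (hg.intervalIntegrable _ _)
  have := intervalIntegral.sum_integral_adjacent_intervals hint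
  push_cast at this
  rw [← zero_mul h, ← this]
  refine sum_congr rfl fun ℓ hℓ => ?_
  exact intervalIntegral.integral_mul_eq_const_mul_of_eqOn_Ico (hmono ℓ) (hQ ℓ (mem_range.mp hℓ))

end StepFunction

theorem intervalIntegral.integral_cexp_mul_shift (w : ℂ) (a h : ℝ) :
    ∫ x in a..a + h, Complex.exp (w * x) =
      Complex.exp (w * a) * ∫ x in 0..h, Complex.exp (w * x) := by
  rw [← intervalIntegral.integral_const_mul]
  have := intervalIntegral.integral_comp_add_left (fun x : ℝ => Complex.exp (w * x))
    (a := 0) (b := h) a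
  rw [add_zero] at this
  rw [← this]
  congr 1 with x
  rw [← Complex.exp_add]
  push_cast
  ring_nf

open Real in
theorem stmt_2_general (C : ℕ) (hC : 2 ≤ C) (Q : ℝ → ℂ)
    (hQ : ∀ ℓ : ℤ, ∀ φ : ℝ, (2 * ℓ * π) / C ≤ φ → φ < (2 * (ℓ + 1) * π) / C →
      Q φ = Complex.exp (Complex.I * ((2 * ℓ + 1) * π / C)))
    (k : ℤ) (hk : ¬ ∃ p : ℤ, k = 1 - p * C) :
    ((1 / (2 * π) : ℝ) : ℂ) *
        ∫ φ in (0 : ℝ)..(2 * π), Q φ * Complex.exp (-Complex.I * k * φ) = 0 := by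
  have hC0 : C ≠ 0 := by omega
  set h := 2 * π / C with h_def
  set c : ℕ → ℂ := fun ℓ => Complex.exp (Complex.I * ((2 * ℓ + 1) * π / C))
  set ζ := Complex.exp (2 * π * Complex.I / C) ^ (1 - k)
  set J := ∫ x in 0..h, Complex.exp (-Complex.I * k * x)
  have hQ_step : ∀ ℓ < C, ∀ x ∈ Ico (ℓ * h) ((ℓ + 1) * h), Q x = c ℓ := by
    intro ℓ _ x ⟨hx₁, hx₂⟩
    have h_left : 2 * ((ℓ : ℤ) : ℝ) * π / C = ℓ * h := by rw [h_def]; push_cast; ring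
    have h_right : 2 * (((ℓ : ℤ) : ℝ) + 1) * π / C = (ℓ + 1) * h := by rw [h_def]; push_cast; ring
    rw [hQ ℓ x (h_left.trans_le hx₁) (hx₂.trans_eq h_right.symm)]
    push_cast
    rfl
  have hpiece (ℓ : ℕ) : c ℓ * ∫ x in ℓ * h..(ℓ + 1) * h, Complex.exp (-Complex.I * k * x) =
      Complex.exp (Complex.I * π / C) * J * ζ ^ ℓ := by
    have hphase : c ℓ * Complex.exp (-Complex.I * k * (ℓ * h : ℝ)) =
        Complex.exp (Complex.I * π / C) * ζ ^ ℓ := by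
      simp only [c, ζ, ← Complex.exp_int_mul, ← Complex.exp_nat_mul, ← Complex.exp_add, h]
      congr 1
      push_cast
      field_simp
      ring
    rw [add_mul, one_mul, intervalIntegral.integral_cexp_mul_shift]
    linear_combination J * hphase
  have hζ : ¬ (C : ℤ) ∣ (1 - k) := fun ⟨p, hp⟩ => hk ⟨p, by linarith⟩
  have h_period : 2 * π = C * h := by rw [h_def]; field_simp
  rw [h_period, intervalIntegral.integral_mul_eq_sum_of_eqOn_Ico (by positivity) hQ_step
    (by fun_prop), sum_congr rfl fun ℓ _ => hpiece ℓ, ← mul_sum,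
    (Complex.isPrimitiveRoot_exp C hC0).geom_sum_zpow_eq_zero hζ, mul_zero, mul_zero]

open Real in
/-- For nonzero `k` not of the form `1 - p C`, the `k`-th Fourier coefficient of
the nearest-neighbor quantization function vanishes. -/
theorem stmt_2 (C : ℕ) (hC : 2 ≤ C) (Q : ℝ → ℂ)
    (hQ : ∀ ℓ : ℤ, ∀ φ : ℝ, (2 * ℓ * π) / C ≤ φ → φ < (2 * (ℓ + 1) * π) / C →
      Q φ = Complex.exp (Complex.I * ((2 * ℓ + 1) * π / C)))
    (k : ℤ) (hk0 : k ≠ 0) (hk : ¬ ∃ p : ℤ, k = 1 - p * C) :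
    ((1 / (2 * π) : ℝ) : ℂ) *
        ∫ φ in (0 : ℝ)..(2 * π), Q φ * Complex.exp (-Complex.I * k * φ) = 0 :=
  stmt_2_general C hC Q hQ k hk
end

section
/- Define g(β) = |C(β) + i·S(β)|/β for β > 0, where C(β) = ∫₀^β cos(πt²/2) dt and S(β) = ∫₀^β sin(πt²/2) dt. Then lim_{β→0⁺} g(β) = 1, and g(β) < 1 for all β > 0. -/
/-!
`C(β) + i S(β)` is `z = ∫₀^β e^{iπt²/2} dt`. As a function of `β` its derivative at `0` is
`e⁰ = 1`, which gives the limit. For the bound, `‖z‖² = ∫₀^β ⟪z, e^{iπt²/2}⟫ dt ≤ β ‖z‖`, and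
equality would force the unit-modulus integrand to be the constant `z / ‖z‖`, which it is not.
-/

open Real Set Filter Topology intervalIntegral
open scoped InnerProductSpace

section InnerProductSpace

variable {E : Type*} [NormedAddCommGroup E] [InnerProductSpace ℝ E]

theorem smul_eq_of_real_inner_eq_norm {z w : E} (hw : ‖w‖ ≤ 1) (h : ⟪z, w⟫_ℝ = ‖z‖) :
    ‖z‖ • w = z := by
  have h_sq : ‖‖z‖ • w - z‖ ^ 2 ≤ 0 := by
    rw [norm_sub_sq_real, norm_smul, real_inner_smul_left, real_inner_comm, h, norm_norm]
    have := mul_le_of_le_one_right (norm_nonneg z) hw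
    nlinarith [mul_nonneg (norm_nonneg z) (norm_nonneg w)]
  exact sub_eq_zero.mp (norm_eq_zero.mp (by nlinarith [norm_nonneg (‖z‖ • w - z)]))

theorem norm_integral_lt_of_norm_le_one [CompleteSpace E] {f : ℝ → E} {a b : ℝ} (hab : a < b)
    (hf : ContinuousOn f (Icc a b)) (hf_norm : ∀ t ∈ Icc a b, ‖f t‖ ≤ 1)
    (hf_ne : ∃ x ∈ Icc a b, ∃ y ∈ Icc a b, f x ≠ f y) :
    ‖∫ t in a..b, f t‖ < b - a := by
  set z := ∫ t in a..b, f t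
  rcases eq_or_ne z 0 with hz | hz
  · simpa [hz] using hab
  have h_le : ∀ t ∈ Icc a b, ⟪z, f t⟫_ℝ ≤ ‖z‖ := fun t ht =>
    (real_inner_le_norm _ _).trans (mul_le_of_le_one_right (norm_nonneg z) (hf_norm t ht))
  have h_lt : ∃ t ∈ Icc a b, ⟪z, f t⟫_ℝ < ‖z‖ := by
    obtain ⟨x, hx, y, hy, hxy⟩ := hf_ne
    by_contra! h
    have h_eq : ∀ t ∈ Icc a b, ‖z‖ • f t = z := fun t ht =>
      smul_eq_of_real_inner_eq_norm (hf_norm t ht) (le_antisymm (h_le t ht) (h t ht))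
    exact hxy <| smul_right_injective E (norm_ne_zero_iff.mpr hz) <|
      (h_eq x hx).trans (h_eq y hy).symm
  have h_int : ‖z‖ * ‖z‖ < (b - a) * ‖z‖ := calc
    ‖z‖ * ‖z‖ = ⟪z, z⟫_ℝ := (real_inner_self_eq_norm_mul_norm z).symm
    _ = ∫ t in a..b, ⟪z, f t⟫_ℝ :=
      ((innerSL ℝ z).intervalIntegral_comp_comm (hf.intervalIntegrable_of_Icc hab.le)).symm
    _ < ∫ _ in a..b, ‖z‖ :=
      integral_lt_integral_of_continuousOn_of_le_of_exists_lt hab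
        (continuousOn_const.inner hf) continuousOn_const
        (fun t ht => h_le t (Ioc_subset_Icc_self ht)) h_lt
    _ = (b - a) * ‖z‖ := by simp
  exact lt_of_mul_lt_mul_right h_int (norm_nonneg z)

end InnerProductSpace

theorem tendsto_norm_div_of_hasDerivWithinAt {E : Type*} [NormedAddCommGroup E] [NormedSpace ℝ E]
    {F : ℝ → E} {v : E} (hF₀ : F 0 = 0) (hF : HasDerivWithinAt F v (Ioi 0) 0) :
    Tendsto (fun β => ‖F β‖ / β) (𝓝[>] 0) (𝓝 ‖v‖) := by
  have h_slope := ((hasDerivWithinAt_iff_tendsto_slope' (lt_irrefl 0)).mp hF).norm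
  refine h_slope.congr' ?_
  filter_upwards [self_mem_nhdsWithin] with β (hβ : 0 < β)
  rw [slope_def_module, hF₀, sub_zero, sub_zero, norm_smul, norm_inv, Real.norm_of_nonneg hβ.le,
    inv_mul_eq_div]

theorem integral_cexp_ofReal_mul_I {φ : ℝ → ℝ} (hφ : Continuous φ) (a b : ℝ) :
    ∫ t in a..b, Complex.exp (φ t * Complex.I) =
      ((∫ t in a..b, cos (φ t) : ℝ) : ℂ) + Complex.I * ((∫ t in a..b, sin (φ t) : ℝ) : ℂ) := by
  simp_rw [Complex.exp_mul_I, ← Complex.ofReal_cos, ← Complex.ofReal_sin]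
  rw [integral_add, integral_mul_const, integral_ofReal, integral_ofReal, mul_comm]
  · exact (Complex.continuous_ofReal.comp (continuous_cos.comp hφ)).intervalIntegrable a b
  · exact ((Complex.continuous_ofReal.comp (continuous_sin.comp hφ)).mul
      continuous_const).intervalIntegrable a b

open Real in
/-- For the Fresnel integrals `C(β) = ∫₀^β cos(πt²/2) dt` and
`S(β) = ∫₀^β sin(πt²/2) dt`, the function `g(β) = |C(β) + i S(β)|/β` tends to
`1` as `β → 0⁺` and satisfies `g(β) < 1` for every `β > 0`. -/
theorem stmt_17 (g : ℝ → ℝ)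
    (hg : ∀ β : ℝ, g β = ‖((∫ t in (0 : ℝ)..β, Real.cos (π * t ^ 2 / 2) : ℝ) : ℂ) +
          Complex.I * ((∫ t in (0 : ℝ)..β, Real.sin (π * t ^ 2 / 2) : ℝ) : ℂ)‖ / β) :
    Filter.Tendsto g (nhdsWithin 0 (Set.Ioi 0)) (nhds 1) ∧
    ∀ β : ℝ, 0 < β → g β < 1 := by
  set f : ℝ → ℂ := fun t => Complex.exp (((π * t ^ 2 / 2 : ℝ) : ℂ) * Complex.I)
  have hf : Continuous f := by fun_prop
  have hg_eq : g = fun β => ‖∫ t in (0 : ℝ)..β, f t‖ / β := funext fun β => by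
    rw [hg, integral_cexp_ofReal_mul_I (by fun_prop)]
  refine ⟨?_, fun β hβ => ?_⟩
  · have h_deriv := (hf.integral_hasStrictDerivAt 0 0).hasDerivAt.hasDerivWithinAt (s := Ioi 0)
    simpa [hg_eq, f] using tendsto_norm_div_of_hasDerivWithinAt (by simp) h_deriv
  · set x₀ := min β 1
    have hx₀ : 0 < x₀ := lt_min hβ one_pos
    have h_sin : 0 < sin (π * x₀ ^ 2 / 2) := by
      have : x₀ ^ 2 ≤ 1 := pow_le_one₀ hx₀.le (min_le_right _ _)
      exact sin_pos_of_pos_of_lt_pi (by positivity) (by nlinarith [pi_pos])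
    have h_ne : f x₀ ≠ f 0 := fun h => by
      have h_im := congrArg Complex.im h
      simp only [f, Complex.exp_ofReal_mul_I_im] at h_im
      simp [h_im] at h_sin
    rw [hg_eq, div_lt_one hβ]
    simpa using norm_integral_lt_of_norm_le_one hβ hf.continuousOn
      (fun t _ => (Complex.norm_exp_ofReal_mul_I _).le)
      ⟨x₀, ⟨hx₀.le, min_le_left _ _⟩, 0, ⟨le_rfl, hβ.le⟩, h_ne⟩
end
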